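/- arXiv:2302.06240 — 3 statements merged into one kernel-verified Lean document; each statement's English description precedes it below -/
import Mathlib

section
/- Let (M_N)_{N≥1} be a sequence of closed subspaces of H¹(Ω) ∩ L²₀(Ω) such that for every p ∈ H¹(Ω) ∩ L²₀(Ω), the orthogonal projections P_{M_N} p (with respect to the inner product (p,q) ↦ (∇p,∇q)) converge to p in H¹(Ω). Define V_N = { v ∈ L²(Ω)^d : (v, ∇q)_{L²} = 0 for all q ∈ M_N } and V(Ω) = { v ∈ L²(Ω)^d : (v, ∇ξ)_{L²} = 0 for all ξ ∈ H¹(Ω) }. Suppose W is dense in V(Ω) for the L² norm and for each N there is Π_N : W → V_N with Π_N φ → φ in L²(Ω)^d for every φ ∈ W. If (v_N)_{N≥1} ⊂ L²(Ω)^d converges strongly in L²(Ω)^d to v, then P_{V_N} v_N converges strongly in L²(Ω)^d to P_{V(Ω)} v, where P_{V_N} and P_{V(Ω)} denote the L²-orthogonal projections onto V_N and V(Ω). -/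
open Filter Topology
open scoped RealInnerProductSpace

/-!
Let `v = lim v_N` and `u = P_V v`. Fix `φ ∈ W` near `u` and `p` with `∇p` near `v - u`; the
latter is possible because `v - u ⊥ V = (range ∇)ᗮ`, so `v - u` lies in the closure of the range
of `∇`.
Since `P_{V_N} v_N - Π_N φ ∈ V_N` and `∇(P_{M_N} p)` is orthogonal to `V_N`,
`‖P_{V_N} v_N - Π_N φ‖ ≤ ‖v_N - ∇(P_{M_N} p) - Π_N φ‖`, and the right-hand side tends to
`‖v - ∇p - φ‖`, which is small. Hence `limsup ‖P_{V_N} v_N - u‖` is arbitrarily small.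
-/

section

variable {E : Type*} [NormedAddCommGroup E] [InnerProductSpace ℝ E]

/-- If `z` is the orthogonal projection of `x` onto a subspace containing `y`, and `g` is
orthogonal to that subspace, then `z - y` is the projection of `x - g - y`. -/
theorem norm_sub_le_norm_sub_sub_of_inner_eq_zero {x y z g : E}
    (hz : ⟪x - z, z - y⟫ = 0) (hg : ⟪g, z - y⟫ = 0) : ‖z - y‖ ≤ ‖x - g - y‖ := by
  have hsq : ‖z - y‖ * ‖z - y‖ ≤ ‖x - g - y‖ * ‖z - y‖ :=
    calc ‖z - y‖ * ‖z - y‖ = ⟪(x - z) - g + (z - y), z - y⟫ := by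
          rw [inner_add_left, inner_sub_left, hz, hg, real_inner_self_eq_norm_mul_norm]; ring
      _ = ⟪x - g - y, z - y⟫ := by congr 1; abel
      _ ≤ ‖x - g - y‖ * ‖z - y‖ := real_inner_le_norm _ _
  nlinarith [norm_nonneg (z - y), norm_nonneg (x - g - y)]

theorem mem_closure_range_of_inner_eq_zero [CompleteSpace E] {F : Type*}
    [AddCommGroup F] [Module ℝ F] (T : F →ₗ[ℝ] E) {r : E}
    (hr : ∀ w, (∀ q, ⟪w, T q⟫ = 0) → ⟪r, w⟫ = 0) : r ∈ closure (Set.range T) := by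
  rw [← LinearMap.coe_range, ← Submodule.topologicalClosure_coe,
    ← Submodule.orthogonal_orthogonal_eq_closure, SetLike.mem_coe, Submodule.mem_orthogonal]
  intro w hw
  rw [real_inner_comm]
  refine hr w fun q => ?_
  rw [real_inner_comm]
  exact (Submodule.mem_orthogonal _ w).1 hw (T q) ⟨q, rfl⟩

end

theorem tendsto_of_norm_sub_le_of_tendsto_lt {E : Type*} [SeminormedAddCommGroup E]
    {f : ℕ → E} {u : E}
    (h : ∀ ε > 0, ∃ b : ℕ → ℝ, ∃ c < ε, Tendsto b atTop (𝓝 c) ∧ ∀ N, ‖f N - u‖ ≤ b N) :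
    Tendsto f atTop (𝓝 u) := by
  refine Metric.tendsto_nhds.2 fun ε hε => ?_
  obtain ⟨b, c, hcε, hb, hfb⟩ := h ε hε
  filter_upwards [hb.eventually (gt_mem_nhds hcε)] with N hN
  rw [dist_eq_norm]
  exact (hfb N).trans_lt hN

theorem projection_continuity_general
    {H Q : Type*} [NormedAddCommGroup H] [InnerProductSpace ℝ H] [CompleteSpace H]
    [NormedAddCommGroup Q] [InnerProductSpace ℝ Q]
    (grad : Q →L[ℝ] H)
    (M : ℕ → Submodule ℝ Q)
    (PM : ℕ → Q → Q)
    (hPMmem : ∀ N p, PM N p ∈ M N)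
    (hMconv : ∀ p : Q, Tendsto (fun N => PM N p) atTop (𝓝 p))
    (PVN : ℕ → H → H)
    (hPVNmem : ∀ N x, ∀ q ∈ M N, ⟪PVN N x, grad q⟫ = 0)
    (hPVNorth : ∀ N x w, (∀ q ∈ M N, ⟪w, grad q⟫ = 0) → ⟪x - PVN N x, w⟫ = 0)
    (PV : H → H)
    (hPVmem : ∀ x, ∀ q : Q, ⟪PV x, grad q⟫ = 0)
    (hPVorth : ∀ x w, (∀ q : Q, ⟪w, grad q⟫ = 0) → ⟪x - PV x, w⟫ = 0)
    (W : Set H)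
    (hWdense : ∀ v : H, (∀ q : Q, ⟪v, grad q⟫ = 0) → v ∈ closure W)
    (Pi : ℕ → H → H)
    (hPimem : ∀ N, ∀ φ ∈ W, ∀ q ∈ M N, ⟪Pi N φ, grad q⟫ = 0)
    (hPiconv : ∀ φ ∈ W, Tendsto (fun N => Pi N φ) atTop (𝓝 φ))
    (v : ℕ → H) (vlim : H) (hv : Tendsto v atTop (𝓝 vlim)) :
    Tendsto (fun N => PVN N (v N)) atTop (𝓝 (PV vlim)) := by
  set u := PV vlim
  refine tendsto_of_norm_sub_le_of_tendsto_lt fun ε hε => ?_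
  obtain ⟨φ, hφW, hφ⟩ : ∃ φ ∈ W, dist u φ < ε / 3 :=
    Metric.mem_closure_iff.1 (hWdense u (hPVmem vlim)) _ (by positivity)
  obtain ⟨p, hp⟩ : ∃ p, dist (vlim - u) (grad p) < ε / 3 := Metric.mem_closure_range_iff.1
    (mem_closure_range_of_inner_eq_zero (grad : Q →ₗ[ℝ] H) (hPVorth vlim)) _ (by positivity)
  rw [dist_eq_norm] at hφ hp
  refine ⟨fun N => ‖v N - grad (PM N p) - Pi N φ‖ + ‖Pi N φ - u‖,
    ‖vlim - grad p - φ‖ + ‖φ - u‖, ?_, ?_, fun N => ?_⟩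
  · have : ‖vlim - grad p - φ‖ ≤ ‖vlim - u - grad p‖ + ‖u - φ‖ := by
      rw [show vlim - grad p - φ = (vlim - u - grad p) + (u - φ) by abel]
      exact norm_add_le _ _
    linarith [norm_sub_rev φ u]
  · have hgrad := (grad.continuous.tendsto p).comp (hMconv p)
    exact ((hv.sub hgrad).sub (hPiconv φ hφW)).norm.add ((hPiconv φ hφW).sub_const u).norm
  · have hVN : ∀ q ∈ M N, ⟪PVN N (v N) - Pi N φ, grad q⟫ = 0 := fun q hq => by
      rw [inner_sub_left, hPVNmem N (v N) q hq, hPimem N φ hφW q hq, sub_zero]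
    have hproj := norm_sub_le_norm_sub_sub_of_inner_eq_zero (hPVNorth N (v N) _ hVN)
      (by rw [real_inner_comm]; exact hVN _ (hPMmem N p))
    exact (norm_sub_le_norm_sub_add_norm_sub _ _ _).trans (add_le_add_left hproj _)

theorem projection_continuity
    {H Q : Type*} [NormedAddCommGroup H] [InnerProductSpace ℝ H] [CompleteSpace H]
    [NormedAddCommGroup Q] [InnerProductSpace ℝ Q] [CompleteSpace Q]
    (grad : Q →L[ℝ] H)
    (M : ℕ → Submodule ℝ Q) (hMclosed : ∀ N, IsClosed (M N : Set Q))
    (PM : ℕ → Q → Q)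
    (hPMmem : ∀ N p, PM N p ∈ M N)
    (hPMorth : ∀ N p, ∀ q ∈ M N, ⟪p - PM N p, q⟫ = 0)
    (hMconv : ∀ p : Q, Tendsto (fun N => PM N p) atTop (𝓝 p))
    (PVN : ℕ → H → H)
    (hPVNmem : ∀ N x, ∀ q ∈ M N, ⟪PVN N x, grad q⟫ = 0)
    (hPVNorth : ∀ N x w, (∀ q ∈ M N, ⟪w, grad q⟫ = 0) → ⟪x - PVN N x, w⟫ = 0)
    (PV : H → H)
    (hPVmem : ∀ x, ∀ q : Q, ⟪PV x, grad q⟫ = 0)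
    (hPVorth : ∀ x w, (∀ q : Q, ⟪w, grad q⟫ = 0) → ⟪x - PV x, w⟫ = 0)
    (W : Set H)
    (hWdense : ∀ v : H, (∀ q : Q, ⟪v, grad q⟫ = 0) → v ∈ closure W)
    (Pi : ℕ → H → H)
    (hPimem : ∀ N, ∀ φ ∈ W, ∀ q ∈ M N, ⟪Pi N φ, grad q⟫ = 0)
    (hPiconv : ∀ φ ∈ W, Tendsto (fun N => Pi N φ) atTop (𝓝 φ))
    (v : ℕ → H) (vlim : H) (hv : Tendsto v atTop (𝓝 vlim)) :
    Tendsto (fun N => PVN N (v N)) atTop (𝓝 (PV vlim)) :=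
  projection_continuity_general grad M PM hPMmem hMconv PVN hPVNmem hPVNorth PV hPVmem hPVorth W
    hWdense Pi hPimem hPiconv v vlim hv
end

section
/- With Π_D as above, if v ∈ W^{1,∞}₀(Ω)^d and x ∈ Ω are such that Π_D v(x) ≠ 0, then there exists y with |x − y| ≤ C·h_𝒯 and v(y) ≠ 0, where h_𝒯 is the mesh size and C depends only on d and the mesh regularity parameter θ_𝒯. -/
open MeasureTheory
open scoped RealInnerProductSpace

/-- Pointwise divergence of a vector field on `ℝ^d` (via `fderiv`). -/
noncomputable def vdiv {d : ℕ}
    (f : EuclideanSpace ℝ (Fin d) → EuclideanSpace ℝ (Fin d))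
    (x : EuclideanSpace ℝ (Fin d)) : ℝ :=
  ∑ l : Fin d, fderiv ℝ f x (EuclideanSpace.single l 1) l

/-- The closed simplex spanned by the vertices indexed by `K`. -/
def cellHull {d m : ℕ} (y : Fin m → EuclideanSpace ℝ (Fin d)) (K : Finset (Fin m)) :
    Set (EuclideanSpace ℝ (Fin d)) :=
  convexHull ℝ (y '' ↑K)

/-- `{i,j}` is an edge of the mesh: two distinct vertices belonging to a common cell. -/
def meshAdj {m : ℕ} (cells : Finset (Finset (Fin m))) (i j : Fin m) : Prop :=
  i ≠ j ∧ ∃ K ∈ cells, i ∈ K ∧ j ∈ K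

instance {m : ℕ} (cells : Finset (Finset (Fin m))) (i j : Fin m) :
    Decidable (meshAdj cells i j) :=
  inferInstanceAs (Decidable (i ≠ j ∧ ∃ K ∈ cells, i ∈ K ∧ j ∈ K))

/-- The patch `ω_{ij}`: union of the (closed) cells containing the edge `{i,j}`. -/
def patch {d m : ℕ} (y : Fin m → EuclideanSpace ℝ (Fin d))
    (cells : Finset (Finset (Fin m))) (i j : Fin m) :
    Set (EuclideanSpace ℝ (Fin d)) :=
  ⋃ K ∈ cells, ⋃ (_ : i ∈ K ∧ j ∈ K), cellHull y K

/-- The normalized tangential edge bubble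
`b_{i,j} = ((d+2)(d+1)/|ω_{ij}|) φ_i φ_j (y_j − y_i)`. -/
noncomputable def bubble {d m : ℕ} (y : Fin m → EuclideanSpace ℝ (Fin d))
    (cells : Finset (Finset (Fin m))) (φ : Fin m → EuclideanSpace ℝ (Fin d) → ℝ)
    (i j : Fin m) (x : EuclideanSpace ℝ (Fin d)) : EuclideanSpace ℝ (Fin d) :=
  ((((d : ℝ) + 2) * ((d : ℝ) + 1)) / (volume (patch y cells i j)).toReal) •
    ((φ i x * φ j x) • (y j - y i))

/-- The divergence-correcting operator
`Π_D v = Σ_{i∈𝒩} Σ_{j : {i,j}∈ℰ} (div(φ_i v), φ_j)_{L²} b_{j,i}`. -/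
noncomputable def PiD {d m : ℕ} (Ω : Set (EuclideanSpace ℝ (Fin d)))
    (y : Fin m → EuclideanSpace ℝ (Fin d)) (cells : Finset (Finset (Fin m)))
    (φ : Fin m → EuclideanSpace ℝ (Fin d) → ℝ)
    (v : EuclideanSpace ℝ (Fin d) → EuclideanSpace ℝ (Fin d))
    (x : EuclideanSpace ℝ (Fin d)) : EuclideanSpace ℝ (Fin d) :=
  ∑ i : Fin m, ∑ j : Fin m,
    if meshAdj cells i j then
      (∫ t in Ω, vdiv (fun s => φ i s • v s) t * φ j t) • bubble y cells φ j i x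
    else 0

/-!
A nonzero value `Π_D v (x)` comes from a single term
`(div(φ_i v), φ_j)_{L²} b_{j,i}(x)`. The bubble `b_{j,i}(x)` vanishes unless `φ_j(x) ≠ 0`,
and the hat function `φ_j` vanishes on every cell not having `y_j` as a vertex, so `x` lies
in a cell through `y_j`. Likewise the integral is nonzero only if `div(φ_i v)(t) φ_j(t) ≠ 0`
at some `t ∈ Ω`, which puts `t` in another cell through `y_j`; hence `dist x t ≤ 2 h` for
the mesh size `h`. Since `div(φ_i v)(t) ≠ 0`, `v` cannot vanish on any ball around `t`, in
particular not on `B(t, h)`, which lies within `3 h` of `x`.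
-/

lemma eq_zero_of_mem_convexHull_of_eq_linear_add_const {E : Type*} [AddCommGroup E]
    [Module ℝ E] {s : Set E} {f : E → ℝ} {g : E →ₗ[ℝ] ℝ} {c : ℝ}
    (hf : ∀ x ∈ convexHull ℝ s, f x = g x + c) (hs : ∀ x ∈ s, f x = 0) {x : E}
    (hx : x ∈ convexHull ℝ s) : f x = 0 := by
  have hsub : convexHull ℝ s ⊆ {w | g w = -c} := by
    refine convexHull_min (fun p hp => ?_) (convex_hyperplane g.isLinear (-c))
    show g p = -c
    linarith [hf p (subset_convexHull ℝ s hp), hs p hp]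
  have hgx : g x = -c := hsub hx
  rw [hf x hx, hgx, neg_add_cancel]

lemma Metric.diam_pos_of_ball_subset {E : Type*} [NormedAddCommGroup E] [NormedSpace ℝ E]
    [Nontrivial E] {s : Set E} (hs : Bornology.IsBounded s) {z : E} {r : ℝ} (hr : 0 < r)
    (hball : Metric.ball z r ⊆ s) : 0 < Metric.diam s :=
  calc 0 < 2 * r := by positivity
    _ = Metric.diam (Metric.ball z r) := (Metric.diam_ball_eq z hr.le).symm
    _ ≤ Metric.diam s := Metric.diam_mono hball hs

section Mesh

variable {d m : ℕ}

lemma isBounded_cellHull (y : Fin m → EuclideanSpace ℝ (Fin d)) (K : Finset (Fin m)) :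
    Bornology.IsBounded (cellHull y K) :=
  isBounded_convexHull.mpr (Set.toFinite _).isBounded

lemma mem_of_mem_cellHull_of_ne_zero {y : Fin m → EuclideanSpace ℝ (Fin d)}
    {K : Finset (Fin m)} {φ : Fin m → EuclideanSpace ℝ (Fin d) → ℝ}
    (hkron : ∀ i j, φ i (y j) = if i = j then (1 : ℝ) else 0) {i : Fin m}
    (haff : ∃ (g : EuclideanSpace ℝ (Fin d) →ₗ[ℝ] ℝ) (c : ℝ),
      ∀ x ∈ cellHull y K, φ i x = g x + c)
    {x : EuclideanSpace ℝ (Fin d)} (hx : x ∈ cellHull y K) (hφ : φ i x ≠ 0) : i ∈ K := by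
  by_contra hi
  obtain ⟨g, c, hgc⟩ := haff
  refine hφ (eq_zero_of_mem_convexHull_of_eq_linear_add_const hgc ?_ hx)
  rintro _ ⟨a, ha, rfl⟩
  rw [hkron, if_neg (ne_of_mem_of_not_mem ha hi).symm]

lemma hat_ne_zero_of_bubble_ne_zero {y : Fin m → EuclideanSpace ℝ (Fin d)}
    {cells : Finset (Finset (Fin m))} {φ : Fin m → EuclideanSpace ℝ (Fin d) → ℝ}
    {i j : Fin m} {x : EuclideanSpace ℝ (Fin d)} (h : bubble y cells φ i j x ≠ 0) :
    φ i x ≠ 0 ∧ φ j x ≠ 0 :=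
  ⟨fun h0 => h (by simp [bubble, h0]), fun h0 => h (by simp [bubble, h0])⟩

lemma exists_term_ne_zero_of_PiD_ne_zero {Ω : Set (EuclideanSpace ℝ (Fin d))}
    {y : Fin m → EuclideanSpace ℝ (Fin d)} {cells : Finset (Finset (Fin m))}
    {φ : Fin m → EuclideanSpace ℝ (Fin d) → ℝ}
    {v : EuclideanSpace ℝ (Fin d) → EuclideanSpace ℝ (Fin d)} {x : EuclideanSpace ℝ (Fin d)}
    (h : PiD Ω y cells φ v x ≠ 0) :
    ∃ i j, (∫ t in Ω, vdiv (fun s => φ i s • v s) t * φ j t) ≠ 0 ∧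
      bubble y cells φ j i x ≠ 0 := by
  obtain ⟨i, -, hi⟩ := Finset.exists_ne_zero_of_sum_ne_zero h
  obtain ⟨j, -, hij⟩ := Finset.exists_ne_zero_of_sum_ne_zero hi
  split_ifs at hij
  · exact ⟨i, j, left_ne_zero_of_smul hij, right_ne_zero_of_smul hij⟩
  · exact absurd rfl hij

lemma vdiv_eq_zero_of_eventuallyEq_zero
    {f : EuclideanSpace ℝ (Fin d) → EuclideanSpace ℝ (Fin d)} {t : EuclideanSpace ℝ (Fin d)}
    (h : f =ᶠ[nhds t] 0) : vdiv f t = 0 := by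
  simp [vdiv, h.fderiv_eq]

lemma exists_dist_lt_ne_zero_of_vdiv_ne_zero
    {f : EuclideanSpace ℝ (Fin d) → EuclideanSpace ℝ (Fin d)} {t : EuclideanSpace ℝ (Fin d)}
    (h : vdiv f t ≠ 0) {ε : ℝ} (hε : 0 < ε) : ∃ s, dist s t < ε ∧ f s ≠ 0 := by
  by_contra! hc
  exact h (vdiv_eq_zero_of_eventuallyEq_zero
    (Filter.eventually_of_mem (Metric.ball_mem_nhds t hε) hc))

end Mesh

/-- Lemma 4.8 of the paper: support locality of the divergence-correcting
operator.  There is a constant `C` depending only on `d` and the mesh-regularity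
parameter `θ` such that, for any conforming simplicial mesh with regularity `θ` and mesh
size `h_𝒯`, any `v ∈ W^{1,∞}₀(Ω)^d` and any `x ∈ Ω` with `Π_D v (x) ≠ 0`, there is a
point `z` with `dist x z ≤ C·h_𝒯` and `v z ≠ 0`. -/
theorem divergence_correcting_support_locality (d : ℕ) (θ : ℝ) :
    ∃ C > (0 : ℝ), ∀ (m : ℕ)
      (Ω : Set (EuclideanSpace ℝ (Fin d))), IsOpen Ω → Bornology.IsBounded Ω →
      ∀ (y : Fin m → EuclideanSpace ℝ (Fin d)) (cells : Finset (Finset (Fin m))),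
      (∀ K ∈ cells, K.card = d + 1) →
      (∀ K ∈ cells, AffineIndependent ℝ (fun i : {x // x ∈ K} => y i)) →
      (closure Ω = ⋃ K ∈ cells, cellHull y K) →
      (∀ K ∈ cells, ∀ K' ∈ cells,
        cellHull y K ∩ cellHull y K' = cellHull y (K ∩ K')) →
      -- mesh regularity: each cell contains a ball of radius `r` with `diam ≤ θ·r`
      (∀ K ∈ cells, ∃ (z : EuclideanSpace ℝ (Fin d)) (r : ℝ), 0 < r ∧
        Metric.ball z r ⊆ cellHull y K ∧
        Metric.diam (cellHull y K) ≤ θ * r) →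
      ∀ (φ : Fin m → EuclideanSpace ℝ (Fin d) → ℝ),
      (∀ i, Continuous (φ i)) →
      (∀ i j, φ i (y j) = if i = j then (1 : ℝ) else 0) →
      (∀ K ∈ cells, ∀ i, ∃ (g : EuclideanSpace ℝ (Fin d) →ₗ[ℝ] ℝ) (c : ℝ),
        ∀ x ∈ cellHull y K, φ i x = g x + c) →
      ∀ hT : ℝ, (∀ K ∈ cells, Metric.diam (cellHull y K) ≤ hT) →
      ∀ (v : EuclideanSpace ℝ (Fin d) → EuclideanSpace ℝ (Fin d)),
      (∃ L : NNReal, LipschitzWith L v) →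
      (∀ x ∉ Ω, v x = 0) →
      ∀ x ∈ Ω, PiD Ω y cells φ v x ≠ 0 →
        ∃ z, dist x z ≤ C * hT ∧ v z ≠ 0 := by
  refine ⟨3, by norm_num, ?_⟩
  intro m Ω _ _ y cells _ _ hclos _ hreg φ _ hkron haff hT hhT v _ _ x hxΩ hPiD
  have hcover : ∀ p ∈ Ω, ∃ K ∈ cells, p ∈ cellHull y K := fun p hp => by
    simpa only [hclos, Set.mem_iUnion, exists_prop] using subset_closure hp
  obtain ⟨i, j, hint, hbub⟩ := exists_term_ne_zero_of_PiD_ne_zero hPiD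
  obtain ⟨K, hK, hxK⟩ := hcover x hxΩ
  have hjK := mem_of_mem_cellHull_of_ne_zero hkron (haff K hK j) hxK
    (hat_ne_zero_of_bubble_ne_zero hbub).1
  obtain ⟨t, htΩ, hdiv_mul⟩ := exists_ne_zero_of_setIntegral_ne_zero hint
  obtain ⟨K', hK', htK'⟩ := hcover t htΩ
  have hjK' := mem_of_mem_cellHull_of_ne_zero hkron (haff K' hK' j) htK'
    (right_ne_zero_of_mul hdiv_mul)
  have hvert : ∀ L, j ∈ L → y j ∈ cellHull y L := fun L hj =>
    subset_convexHull ℝ _ ⟨j, hj, rfl⟩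
  have hxt : dist x t ≤ 2 * hT := by
    linarith [dist_triangle x (y j) t, hhT K hK, hhT K' hK',
      Metric.dist_le_diam_of_mem (isBounded_cellHull y K) hxK (hvert K hjK),
      Metric.dist_le_diam_of_mem (isBounded_cellHull y K') (hvert K' hjK') htK']
  -- in dimension `0` cells are points and `hT` may be `0`, but then `Π_D v` vanishes
  have : Nontrivial (EuclideanSpace ℝ (Fin d)) := nontrivial_of_ne _ _ hPiD
  obtain ⟨z, r, hr, hball, -⟩ := hreg K hK
  have hT_pos : 0 < hT :=
    (Metric.diam_pos_of_ball_subset (isBounded_cellHull y K) hr hball).trans_le (hhT K hK)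
  obtain ⟨s, hst, hs⟩ :=
    exists_dist_lt_ne_zero_of_vdiv_ne_zero (left_ne_zero_of_mul hdiv_mul) hT_pos
  exact ⟨s, by linarith [dist_triangle x t s, dist_comm s t], right_ne_zero_of_smul hs⟩
end

section
/- Let (u_N) be the corrected velocities produced by the fully discrete incremental projection scheme, satisfying for each n the energy identity (1/(2δt))(‖uⁿ⁺¹‖²_{L²} − ‖uⁿ‖²_{L²}) + (δt/2)(‖∇pⁿ⁺¹‖²_{L²} − ‖∇pⁿ‖²_{L²}) + (1/(2δt))‖ũⁿ⁺¹ − uⁿ‖²_{L²} + ‖ũⁿ⁺¹‖²_{H¹₀} = ⟨fⁿ⁺¹, ũⁿ⁺¹⟩. Then, with ‖u⁰‖_{L²} ≤ ‖u₀‖_{L²}, p⁰ = 0, and Σₙ δt‖fⁿ⁺¹‖²_{H⁻¹} ≤ ‖f‖²_{L²(0,T;H⁻¹)}, there exists C depending only on ‖u₀‖_{L²}, ‖f‖_{L²(0,T;H⁻¹)} and the Poincaré constant of Ω such that Σ_{n=0}^{N−1} δt ‖ũⁿ⁺¹‖²_{H¹₀} ≤ C, max_n ‖uⁿ‖²_{L²}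 ≤ C, and Σ_{n=0}^{N−1} δt ‖ũⁿ⁺¹ − uⁿ‖²_{L²} ≤ C δt. -/
/-!
Multiplying the energy identity by `2δt` and bounding `2δt⟨fⁿ⁺¹, ũⁿ⁺¹⟩ ≤ δt‖fⁿ⁺¹‖² + δt‖ũⁿ⁺¹‖²`
(Young) shows that the discrete energy `‖uⁿ‖² + δt²‖∇pⁿ‖²` decreases at each step by the
dissipation `‖ũⁿ⁺¹ − uⁿ‖² + δt‖ũⁿ⁺¹‖²_{H¹₀}`, up to the forcing `δt‖fⁿ⁺¹‖²_{H⁻¹}`. Summing these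
steps telescopes the energy, so the energy at any time and the total dissipation are both
bounded by `‖u₀‖² + ‖f‖²_{L²(0,T;H⁻¹)}`.
-/

open Finset

theorem add_sum_range_le_of_succ_add_le {α : Type*} [AddCommGroup α] [PartialOrder α]
    [IsOrderedAddMonoid α] {E D F : ℕ → α} {N : ℕ}
    (hstep : ∀ n < N, E (n + 1) + D n ≤ E n + F n) :
    ∀ m ≤ N, E m + ∑ n ∈ range m, D n ≤ E 0 + ∑ n ∈ range m, F n := by
  intro m hm
  induction m with
  | zero => simp
  | succ k ih =>
    have hk := hstep k hm
    calc E (k + 1) + ∑ n ∈ range (k + 1), D n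
        = (E (k + 1) + D k) + ∑ n ∈ range k, D n := by rw [sum_range_succ]; abel
      _ ≤ (E k + F k) + ∑ n ∈ range k, D n := by gcongr
      _ = (E k + ∑ n ∈ range k, D n) + F k := by abel
      _ ≤ (E 0 + ∑ n ∈ range k, F n) + F k := add_le_add_left (ih (by omega)) _
      _ = E 0 + ∑ n ∈ range (k + 1), F n := by rw [sum_range_succ]; abel

theorem projection_energy_step {δt a a' g g' d u f p : ℝ} (hδt : 0 < δt) (hp : p ≤ f * u)
    (henergy : 1 / (2 * δt) * (a' ^ 2 - a ^ 2) + δt / 2 * (g' ^ 2 - g ^ 2)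
      + 1 / (2 * δt) * d ^ 2 + u ^ 2 = p) :
    a' ^ 2 + δt ^ 2 * g' ^ 2 + (d ^ 2 + δt * u ^ 2) ≤ a ^ 2 + δt ^ 2 * g ^ 2 + δt * f ^ 2 := by
  have hscaled : a' ^ 2 - a ^ 2 + δt ^ 2 * (g' ^ 2 - g ^ 2) + d ^ 2 + 2 * δt * u ^ 2
      = 2 * δt * p := by
    rw [← henergy]
    field_simp
  have hyoung : 2 * δt * p ≤ δt * (f ^ 2 + u ^ 2) :=
    calc 2 * δt * p ≤ δt * (2 * f * u) := by nlinarith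
      _ ≤ δt * (f ^ 2 + u ^ 2) := by gcongr; exact two_mul_le_add_sq f u
  linarith

/- For each time step `n`, `uL2 n = ‖uⁿ‖_{L²}`, `gpL2 n = ‖∇pⁿ‖_{L²}`,
`dL2 n = ‖ũⁿ⁺¹ − uⁿ‖_{L²}`, `utH n = ‖ũⁿ‖_{H¹₀}`, `fH n = ‖fⁿ‖_{H⁻¹}` and
`pair (n+1) = ⟨fⁿ⁺¹, ũⁿ⁺¹⟩`. -/
theorem projection_scheme_apriori_estimates_general
    (u0norm fnorm T : ℝ)
    (hT : 0 < T) :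
    ∃ C > (0 : ℝ), ∀ (N : ℕ), 1 ≤ N → ∀ δt : ℝ, δt = T / N →
      ∀ (uL2 gpL2 dL2 utH fH pair : ℕ → ℝ),
      (∀ n, 0 ≤ uL2 n) → (∀ n, 0 ≤ gpL2 n) → (∀ n, 0 ≤ dL2 n) →
      (∀ n, 0 ≤ utH n) → (∀ n, 0 ≤ fH n) →
      (∀ n, pair (n + 1) ≤ fH (n + 1) * utH (n + 1)) →
      (∀ n < N,
        (1 / (2 * δt)) * (uL2 (n + 1) ^ 2 - uL2 n ^ 2)
          + (δt / 2) * (gpL2 (n + 1) ^ 2 - gpL2 n ^ 2)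
          + (1 / (2 * δt)) * dL2 n ^ 2 + utH (n + 1) ^ 2 = pair (n + 1)) →
      uL2 0 ≤ u0norm → gpL2 0 = 0 →
      (∑ n ∈ Finset.range N, δt * fH (n + 1) ^ 2 ≤ fnorm ^ 2) →
      (∑ n ∈ Finset.range N, δt * utH (n + 1) ^ 2 ≤ C) ∧
      (∀ n ≤ N, uL2 n ^ 2 ≤ C) ∧
      (∑ n ∈ Finset.range N, δt * dL2 n ^ 2 ≤ C * δt) := by
  refine ⟨u0norm ^ 2 + fnorm ^ 2 + 1, by positivity, ?_⟩
  intro N hN δt hδt uL2 gpL2 dL2 utH fH pair huL2 _ _ _ _ hpair henergy hu0 hp0 hf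
  have hδt_pos : 0 < δt := hδt ▸ div_pos hT (by exact_mod_cast hN)
  have henergy_le : ∀ m ≤ N, uL2 m ^ 2 + δt ^ 2 * gpL2 m ^ 2
      + ∑ n ∈ range m, (dL2 n ^ 2 + δt * utH (n + 1) ^ 2) ≤ u0norm ^ 2 + fnorm ^ 2 := by
    intro m hm
    have htel := add_sum_range_le_of_succ_add_le
      (E := fun n => uL2 n ^ 2 + δt ^ 2 * gpL2 n ^ 2)
      (D := fun n => dL2 n ^ 2 + δt * utH (n + 1) ^ 2) (F := fun n => δt * fH (n + 1) ^ 2)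
      (fun n hn => projection_energy_step hδt_pos (hpair n) (henergy n hn)) m hm
    have hforcing : ∑ n ∈ range m, δt * fH (n + 1) ^ 2 ≤ fnorm ^ 2 :=
      (sum_le_sum_of_subset_of_nonneg (range_subset_range.mpr hm)
        fun _ _ _ => by positivity).trans hf
    have hinit : uL2 0 ^ 2 ≤ u0norm ^ 2 := pow_le_pow_left₀ (huL2 0) hu0 2
    simp only [hp0] at htel
    linarith
  have hdiss := henergy_le N le_rfl
  have hpressure_nonneg : ∀ n, 0 ≤ δt ^ 2 * gpL2 n ^ 2 := fun n => by positivity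
  refine ⟨?_, fun n hn => ?_, ?_⟩
  · have : ∑ n ∈ range N, δt * utH (n + 1) ^ 2
        ≤ ∑ n ∈ range N, (dL2 n ^ 2 + δt * utH (n + 1) ^ 2) :=
      sum_le_sum fun n _ => le_add_of_nonneg_left (sq_nonneg _)
    linarith [sq_nonneg (uL2 N), hpressure_nonneg N]
  · have : 0 ≤ ∑ k ∈ range n, (dL2 k ^ 2 + δt * utH (k + 1) ^ 2) :=
      sum_nonneg fun k _ => by positivity
    linarith [henergy_le n hn, hpressure_nonneg n]
  · have : ∑ n ∈ range N, dL2 n ^ 2 ≤ ∑ n ∈ range N, (dL2 n ^ 2 + δt * utH (n + 1) ^ 2) :=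
      sum_le_sum fun n _ => le_add_of_nonneg_right (by positivity)
    rw [← mul_sum, mul_comm]
    exact mul_le_mul_of_nonneg_right (by linarith [sq_nonneg (uL2 N), hpressure_nonneg N])
      hδt_pos.le

theorem projection_scheme_apriori_estimates
    (u0norm fnorm CP T : ℝ) (hu0n : 0 ≤ u0norm) (hfn : 0 ≤ fnorm) (hCP : 0 < CP)
    (hT : 0 < T) :
    ∃ C > (0 : ℝ), ∀ (N : ℕ), 1 ≤ N → ∀ δt : ℝ, δt = T / N →
      ∀ (uL2 gpL2 dL2 utH fH pair : ℕ → ℝ),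
      (∀ n, 0 ≤ uL2 n) → (∀ n, 0 ≤ gpL2 n) → (∀ n, 0 ≤ dL2 n) →
      (∀ n, 0 ≤ utH n) → (∀ n, 0 ≤ fH n) →
      (∀ n, pair (n + 1) ≤ fH (n + 1) * utH (n + 1)) →
      (∀ n < N,
        (1 / (2 * δt)) * (uL2 (n + 1) ^ 2 - uL2 n ^ 2)
          + (δt / 2) * (gpL2 (n + 1) ^ 2 - gpL2 n ^ 2)
          + (1 / (2 * δt)) * dL2 n ^ 2 + utH (n + 1) ^ 2 = pair (n + 1)) →
      uL2 0 ≤ u0norm → gpL2 0 = 0 →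
      (∑ n ∈ Finset.range N, δt * fH (n + 1) ^ 2 ≤ fnorm ^ 2) →
      (∑ n ∈ Finset.range N, δt * utH (n + 1) ^ 2 ≤ C) ∧
      (∀ n ≤ N, uL2 n ^ 2 ≤ C) ∧
      (∑ n ∈ Finset.range N, δt * dL2 n ^ 2 ≤ C * δt) :=
  projection_scheme_apriori_estimates_general u0norm fnorm T hT
end
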